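/- arXiv:1708.05130 — 7 statements merged into one kernel-verified Lean document; each statement's English description precedes it below -/
import Mathlib

section
/- Let R be an s-unital ring, let p ∈ R be an algebraically infinite idempotent, and let a ∈ R. If p ≾ a (that is, there exist c, d ∈ R with p = c·a·d), then a is algebraically infinite. -/
/-- A (possibly non-unital) ring `R` is s-unital if every element has both a left
and a right local unit. -/
def IsSUnital (R : Type*) [NonUnitalRing R] : Prop :=
  ∀ r : R, ∃ u v : R, u * r = r ∧ r * v = r

/-- An element `a` of a ring `R` is algebraically infinite if there is a nonzero `t ∈ R`
and matrices `α ∈ M_{2×1}(R)`, `β ∈ M_{1×2}(R)` with `diag(a, t) = α ⬝ (a) ⬝ β`,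
where `(a)` is the `1×1` matrix with entry `a`. -/
def AlgebraicallyInfinite {R : Type*} [NonUnitalRing R] (a : R) : Prop :=
  ∃ t : R, t ≠ 0 ∧ ∃ (α : Matrix (Fin 2) (Fin 1) R) (β : Matrix (Fin 1) (Fin 2) R),
    Matrix.diagonal ![a, t] = α * Matrix.of (fun _ _ : Fin 1 => a) * β

/-- Lemma 2.3(1): in an s-unital ring, if `p` is an algebraically infinite idempotent and
`p ≾ a` (i.e. `p = c * a * d` for some `c, d`), then `a` is algebraically infinite. -/
theorem infinite_of_subequivalent {R : Type*} [NonUnitalRing R] (hR : IsSUnital R)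
    (p a : R) (hp : p * p = p) (hpinf : AlgebraicallyInfinite p)
    (hsub : ∃ c d : R, p = c * a * d) :
    AlgebraicallyInfinite a := by
  obtain ⟨t, ht, α, β, heq⟩ := hpinf
  obtain ⟨c, d, hcd⟩ := hsub
  obtain ⟨u, v, hu, hv⟩ := hR a
  have key : ∀ i j, Matrix.diagonal ![p, t] i j = α i 0 * p * β 0 j := by
    intro i j
    rw [heq]
    simp [Matrix.mul_apply, Fin.sum_univ_one, mul_assoc]
  have h00 : α 0 0 * p * β 0 0 = p := by have := key 0 0; simpa using this.symm
  have h01 : α 0 0 * p * β 0 1 = 0 := by have := key 0 1; simpa using this.symm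
  have h10 : α 1 0 * p * β 0 0 = 0 := by have := key 1 0; simpa using this.symm
  have h11 : α 1 0 * p * β 0 1 = t := by have := key 1 1; simpa using this.symm
  set A0 := α 0 0 with hA0
  set A1 := α 1 0 with hA1
  set B0 := β 0 0 with hB0
  set B1 := β 0 1 with hB1
  set C := p * c with hC
  set D := d * p with hD
  have hu' : ∀ x : R, u * (a * x) = a * x := fun x => by rw [← mul_assoc, hu]
  have hcd1 : ∀ x : R, c * (a * (d * x)) = p * x := fun x => by
    rw [← mul_assoc, ← mul_assoc, ← hcd]
  have hcd2 : c * (a * d) = p := by rw [← mul_assoc, ← hcd]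
  have hp1 : ∀ x : R, p * (p * x) = p * x := fun x => by rw [← mul_assoc, hp]
  have h00' : ∀ x : R, A0 * (p * (B0 * x)) = p * x := fun x => by
    rw [← mul_assoc, ← mul_assoc, h00]
  have h00'' : A0 * (p * B0) = p := by rw [← mul_assoc, h00]
  have h01' : ∀ x : R, A0 * (p * (B1 * x)) = 0 := fun x => by
    rw [← mul_assoc, ← mul_assoc, h01, zero_mul]
  have h01'' : A0 * (p * B1) = 0 := by rw [← mul_assoc, h01]
  have h10' : ∀ x : R, A1 * (p * (B0 * x)) = 0 := fun x => by
    rw [← mul_assoc, ← mul_assoc, h10, zero_mul]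
  have h10'' : A1 * (p * B0) = 0 := by rw [← mul_assoc, h10]
  have h11'' : A1 * (p * B1) = t := by rw [← mul_assoc, h11]
  set X1 := u - a * D * C + a * D * A0 * C with hX1
  set Y1 := v - D * C * a * v + D * B0 * C * a * v with hY1
  set X2 := A1 * C with hX2
  set Y2 := D * B1 with hY2
  have G4 : X2 * a * Y2 = t := by
    rw [hX2, hY2, hC, hD]
    simp only [mul_assoc, hcd1, hp1, hv, hu, hu', h11'']
  have G2 : X1 * a * Y2 = 0 := by
    rw [hX1, hY2, hC, hD]
    simp only [sub_mul, add_mul, mul_sub, mul_add, mul_assoc, hcd1, hcd2, hp1, hp, hv, hu, hu',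
      h00', h00'', h01', h01'', h10', h10'', h11'', mul_zero, zero_mul, add_zero, zero_add,
      sub_zero]
    abel
  have G3 : X2 * a * Y1 = 0 := by
    rw [hX2, hY1, hC, hD]
    simp only [sub_mul, add_mul, mul_sub, mul_add, mul_assoc, hcd1, hcd2, hp1, hp, hv, hu, hu',
      h00', h00'', h01', h01'', h10', h10'', h11'', mul_zero, zero_mul, add_zero, zero_add,
      sub_zero]
    abel
  have G1 : X1 * a * Y1 = a := by
    rw [hX1, hY1, hC, hD]
    simp only [sub_mul, add_mul, mul_sub, mul_add, mul_assoc, hcd1, hcd2, hp1, hp, hv, hu, hu',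
      h00', h00'', h01', h01'', h10', h10'', h11'', mul_zero, zero_mul, add_zero, zero_add,
      sub_zero]
    abel
  refine ⟨t, ht, Matrix.of ![![X1], ![X2]], Matrix.of ![![Y1, Y2]], ?_⟩
  ext i j
  fin_cases i <;> fin_cases j <;>
    simp [Matrix.mul_apply, Fin.sum_univ_one, Matrix.diagonal, G1, G2, G3, G4]
end

section
/- Let R be an s-unital ring, let p ∈ R be an algebraically infinite idempotent, and let q ∈ R be an idempotent with p·q = q·p = p. Then q is algebraically infinite. -/
/-!
Write `q = p + e` with `e = q - p`, an idempotent orthogonal to `p`. Read entrywise,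
`diag(p, t) = α (p) β` gives `xᵢ, yⱼ` with `xᵢ p yⱼ` equal to `p`, `t` on the diagonal and
`0` off it; then `x₀ p + e`, `x₁ p`, `p y₀ + e`, `p y₁` do the same for `q`: cutting down
by `p` kills every cross term with `e`, and `e q e = e` completes `p` to `q`.
-/

theorem algebraicallyInfinite_iff {R : Type*} [NonUnitalRing R] {a : R} :
    AlgebraicallyInfinite a ↔ ∃ t : R, t ≠ 0 ∧ ∃ x₀ x₁ y₀ y₁ : R,
      x₀ * a * y₀ = a ∧ x₀ * a * y₁ = 0 ∧ x₁ * a * y₀ = 0 ∧ x₁ * a * y₁ = t := by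
  have entry (α : Matrix (Fin 2) (Fin 1) R) (β : Matrix (Fin 1) (Fin 2) R) (i j : Fin 2) :
      (α * Matrix.of (fun _ _ : Fin 1 => a) * β) i j = α i 0 * a * β 0 j := by
    simp [Matrix.mul_apply]
  constructor
  · rintro ⟨t, ht, α, β, h⟩
    have h' (i j : Fin 2) := (entry α β i j).symm.trans (congrFun (congrFun h i) j).symm
    exact ⟨t, ht, α 0 0, α 1 0, β 0 0, β 0 1, by simpa using h' 0 0, by simpa using h' 0 1,
      by simpa using h' 1 0, by simpa using h' 1 1⟩
  · rintro ⟨t, ht, x₀, x₁, y₀, y₁, h₀₀, h₀₁, h₁₀, h₁₁⟩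
    refine ⟨t, ht, !![x₀; x₁], !![y₀, y₁], ?_⟩
    ext i j
    rw [entry]
    fin_cases i <;> fin_cases j <;> simp [h₀₀, h₀₁, h₁₀, h₁₁]

theorem AlgebraicallyInfinite.add_of_mul_eq_zero {R : Type*} [NonUnitalRing R] {p e : R}
    (hinf : AlgebraicallyInfinite p) (hp : IsIdempotentElem p) (he : IsIdempotentElem e)
    (hpe : p * e = 0) (hep : e * p = 0) : AlgebraicallyInfinite (p + e) := by
  obtain ⟨t, ht, x₀, x₁, y₀, y₁, h₀₀, h₀₁, h₁₀, h₁₁⟩ := algebraicallyInfinite_iff.mp hinf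
  simp only [mul_assoc] at h₀₀ h₀₁ h₁₀ h₁₁
  have hp_mul (y : R) : p * (p * y) = p * y := by rw [← mul_assoc, hp.eq]
  have he_mul (y : R) : e * (p * y) = 0 := by rw [← mul_assoc, hep, zero_mul]
  refine algebraicallyInfinite_iff.mpr
    ⟨t, ht, x₀ * p + e, x₁ * p, p * y₀ + e, p * y₁, ?_, ?_, ?_, ?_⟩ <;>
    simp [mul_add, add_mul, mul_assoc, hp.eq, he.eq, hpe, hep, hp_mul, he_mul, h₀₀, h₀₁, h₁₀, h₁₁]

theorem infinite_of_le_general {R : Type*} [NonUnitalRing R]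
    (p q : R) (hp : p * p = p) (hpinf : AlgebraicallyInfinite p)
    (hq : q * q = q) (hpq : p * q = p) (hqp : q * p = p) :
    AlgebraicallyInfinite q := by
  have hpe : p * (q - p) = 0 := by rw [mul_sub, hpq, hp, sub_self]
  have hep : (q - p) * p = 0 := by rw [sub_mul, hqp, hp, sub_self]
  simpa using hpinf.add_of_mul_eq_zero hp (IsIdempotentElem.sub hp hq hpq hqp) hpe hep

/-- Lemma 2.3(2): in an s-unital ring, if `p` is an algebraically infinite idempotent,
`q` is an idempotent, and `p ≤ q` (i.e. `p * q = q * p = p`), then `q` is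
algebraically infinite. -/
theorem infinite_of_le {R : Type*} [NonUnitalRing R] (hR : IsSUnital R)
    (p q : R) (hp : p * p = p) (hpinf : AlgebraicallyInfinite p)
    (hq : q * q = q) (hpq : p * q = p) (hqp : q * p = p) :
    AlgebraicallyInfinite q :=
  infinite_of_le_general p q hp hpinf hq hpq hqp
end

section
/- Let R be an s-unital ring, let p ∈ R be an algebraically infinite idempotent, and let q ∈ R be an idempotent such that there exist s, t ∈ R with s·t = p and t·s = q. Then q is algebraically infinite. -/
/-- Lemma 2.3(3): in an s-unital ring, if `p` is an algebraically infinite idempotent and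
`q` is an idempotent ring-equivalent to `p` (there are `s, t` with `s * t = p` and
`t * s = q`), then `q` is algebraically infinite. -/
theorem infinite_of_equivalent {R : Type*} [NonUnitalRing R] (hR : IsSUnital R)
    (p q : R) (hp : p * p = p) (hpinf : AlgebraicallyInfinite p)
    (hq : q * q = q) (hequiv : ∃ s t : R, s * t = p ∧ t * s = q) :
    AlgebraicallyInfinite q := by
  obtain ⟨t₀, ht₀, α, β, hαβ⟩ := hpinf
  obtain ⟨s, t, hst, hts⟩ := hequiv
  obtain ⟨u, v, hu, hv⟩ := hR t₀
  refine ⟨t₀, ht₀,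
    Matrix.diagonal ![t, u] * α * Matrix.of (fun _ _ : Fin 1 => s),
    Matrix.of (fun _ _ : Fin 1 => t) * β * Matrix.diagonal ![s, v], ?_⟩
  have key : (Matrix.of (fun _ _ : Fin 1 => s) * Matrix.of (fun _ _ : Fin 1 => q) *
      Matrix.of (fun _ _ : Fin 1 => t) : Matrix (Fin 1) (Fin 1) R) =
      Matrix.of (fun _ _ : Fin 1 => p) := by
    ext i j
    simp [Matrix.mul_apply]
    calc s * q * t = (s * t) * (s * t) := by rw [← hts]; noncomm_ring
    _ = p := by rw [hst, hp]
  calc Matrix.diagonal ![q, t₀]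
      = Matrix.diagonal ![t, u] * Matrix.diagonal ![p, t₀] * Matrix.diagonal ![s, v] := by
        rw [Matrix.diagonal_mul_diagonal, Matrix.diagonal_mul_diagonal]
        have h1 : t * p * s = q := by
          have : t * p * s = (t * s) * (t * s) := by rw [← hst]; noncomm_ring
          rw [this, hts, hq]
        have h2 : u * t₀ * v = t₀ := by rw [hu, hv]
        ext i j
        fin_cases i <;> fin_cases j <;> simp [Matrix.diagonal, h1, h2]
    _ = Matrix.diagonal ![t, u] * (α * Matrix.of (fun _ _ : Fin 1 => p) * β) *
          Matrix.diagonal ![s, v] := by rw [← hαβ]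
    _ = _ := by rw [← key]; simp only [Matrix.mul_assoc]
end

section
/- Let A be a C*-algebra and let A₀ be a dense subalgebra of A (a subalgebra whose closure in the norm topology is A). Let p ∈ A₀ be a projection (p² = p = p*). If p is an infinite idempotent in A₀ — that is, there exist an idempotent e ∈ A₀ and s, t ∈ A₀ with s·t = p, t·s = e, e·p = p·e = e, and e ≠ p — then p is an infinite projection in A: there exist a projection q ∈ A (q² = q = q*) and v ∈ A with v*·v = p, v·v* = q, p·q = q·p = q, and q ≠ p. -/
/-!
The range projection `q = e e* (1 + (e - e*)* (e - e*))⁻¹` of the idempotent `e` is a projection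
with `e q = q` and `q e = e`. Hence `q` is algebraically equivalent to `e`, so to `p`, and `q ≠ p`
because `e ≠ p`. Algebraically equivalent projections, `x y = p` and `y x = q`, are
Murray–von Neumann equivalent: once `x` is replaced by `x q`, the element `k = y y*` inverts
`d = x* x` in the corner `qAq`, and `v = k √d x*` is the partial isometry in the polar
decomposition of `x*`.
-/

open scoped CStarAlgebra

section StarRing

variable {R : Type*} [Ring R] [StarRing R] {e : R}

theorem one_add_star_sub_mul_sub_mul_of_isIdempotentElem (he : IsIdempotentElem e) :
    (1 + star (e - star e) * (e - star e)) * e = e * star e * e := by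
  have he' : IsIdempotentElem (star e) := he.star
  simp only [star_sub, star_star, add_mul, sub_mul, mul_sub, one_mul, mul_assoc, he.eq,
    he'.mul_self_mul]
  abel

theorem mul_one_add_star_sub_mul_sub_of_isIdempotentElem (he : IsIdempotentElem e) :
    e * (1 + star (e - star e) * (e - star e)) = e * star e * e := by
  have he' : IsIdempotentElem (star e) := he.star
  simp only [star_sub, star_star, mul_add, sub_mul, mul_sub, mul_one, ← mul_assoc, he.eq,
    he'.eq]
  abel

end StarRing

theorem CStarAlgebra.exists_isStarProjection_of_isIdempotentElem {B : Type*} [CStarAlgebra B]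
    {e : B} (he : IsIdempotentElem e) :
    ∃ q : B, IsStarProjection q ∧ e * q = q ∧ q * e = e := by
  let := CStarAlgebra.spectralOrder B
  have := CStarAlgebra.spectralOrderedRing B
  obtain ⟨z, hz⟩ : IsUnit (1 + star (e - star e) * (e - star e)) :=
    CStarAlgebra.isUnit_of_le 1 (le_add_of_nonneg_right (star_mul_self_nonneg (e - star e)))
  have hez : e * (z : B) = e * star e * e :=
    hz ▸ mul_one_add_star_sub_mul_sub_of_isIdempotentElem he
  have hz_comm : Commute (z : B) e :=
    (hz ▸ one_add_star_sub_mul_sub_mul_of_isIdempotentElem he).trans hez.symm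
  have hz_star : star z = z := Units.ext <| by
    rw [Units.coe_star, hz]
    simp only [star_add, star_one, star_mul, star_star]
  have hz_comm_star : Commute (z : B) (star e) := by
    simpa only [← Units.coe_star, hz_star] using hz_comm.star_star
  have hqe : e * star e * ↑z⁻¹ * e = e :=
    calc e * star e * ↑z⁻¹ * e = e * star e * e * ↑z⁻¹ := by
          rw [mul_assoc _ (↑z⁻¹ : B), hz_comm.units_inv_left.eq, ← mul_assoc]
      _ = e * (z * ↑z⁻¹) := by rw [← hez, mul_assoc]
      _ = e := by rw [Units.mul_inv, mul_one]
  refine ⟨e * star e * ↑z⁻¹, ⟨?_, ?_⟩, ?_, hqe⟩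
  · rw [IsIdempotentElem]
    simp only [← mul_assoc, hqe]
  · rw [IsSelfAdjoint, star_mul, ← Units.coe_star_inv, hz_star, star_mul, star_star,
      (hz_comm.units_inv_left.mul_right hz_comm_star.units_inv_left).eq]
  · rw [← mul_assoc, ← mul_assoc, he.eq]

theorem Unitization.inr_snd_eq_of_inr_mul_eq {R A : Type*} [MulZeroClass R] [AddZeroClass A]
    [Mul A] [SMulWithZero R A] {a : A} {x : Unitization R A} (h : (a : Unitization R A) * x = x) :
    (x.snd : Unitization R A) = x := by
  have hx : x.fst = 0 := by
    simpa only [Unitization.fst_mul, Unitization.fst_inr, zero_mul] using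
      (congrArg (·.fst) h).symm
  ext
  · rw [Unitization.fst_inr, hx]
  · rw [Unitization.snd_inr]

section NonUnital

variable {A : Type*} [NonUnitalCStarAlgebra A]

theorem NonUnitalCStarAlgebra.exists_isStarProjection_of_isIdempotentElem {e : A}
    (he : IsIdempotentElem e) :
    ∃ q : A, IsStarProjection q ∧ e * q = q ∧ q * e = e := by
  obtain ⟨Q, hQ, heQ, hQe⟩ := CStarAlgebra.exists_isStarProjection_of_isIdempotentElem
    ((Unitization.isIdempotentElem_inr_iff ℂ).mpr he)
  obtain ⟨q, rfl⟩ : ∃ q : A, (q : A⁺¹) = Q := ⟨Q.snd, Unitization.inr_snd_eq_of_inr_mul_eq heQ⟩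
  refine ⟨q, hQ.of_inr, ?_, ?_⟩ <;> apply Unitization.inr_injective (R := ℂ) <;> push_cast <;>
    assumption

variable {p q x y : A}

theorem exists_partialIsometry_of_mul_eq_of_corner (hp : IsStarProjection p)
    (hq : IsStarProjection q) (hxy : x * y = p) (hyx : y * x = q) (hpx : p * x = x)
    (hxq : x * q = x) :
    ∃ v : A, star v * v = p ∧ v * star v = q := by
  let := CStarAlgebra.spectralOrder A
  have := CStarAlgebra.spectralOrderedRing A
  have hxp : star x * p = star x := by rw [← hp.isSelfAdjoint.star_eq, ← star_mul, hpx]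
  have hqx : q * star x = star x := by rw [← hq.isSelfAdjoint.star_eq, ← star_mul, hxq]
  set d := star x * x
  set k := y * star y
  have hdk : d * k = q :=
    calc d * k = star x * p * star y := by rw [← hxy]; simp only [d, k, mul_assoc]
      _ = star (y * x) := by rw [hxp, star_mul]
      _ = q := by rw [hyx, hq.isSelfAdjoint.star_eq]
  have hkd : k * d = q :=
    calc k * d = y * star (x * y) * x := by rw [star_mul]; simp only [d, k, mul_assoc]
      _ = q := by rw [hxy, hp.isSelfAdjoint.star_eq, mul_assoc, hpx, hyx]
  have hqd : q * d = d := by simp only [d, ← mul_assoc, hqx]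
  set c := CFC.sqrt d
  have hcc : c * c = d := CFC.sqrt_mul_sqrt_self d (star_mul_self_nonneg x)
  have hdk_comm : Commute d k := hdk.trans hkd.symm
  have hck : Commute c k := hdk_comm.cfcₙ_nnreal _
  have hcd : Commute c d := (Commute.refl d).cfcₙ_nnreal _
  set m := k * c
  have hm_star : star m = m := by
    rw [star_mul, (CFC.sqrt_nonneg d).isSelfAdjoint.star_eq, star_mul, star_star, hck.eq]
  have hmm : m * m = k * q :=
    calc m * m = k * (c * k) * c := by simp only [m, mul_assoc]
      _ = k * (k * d) := by rw [hck.eq]; simp only [mul_assoc, hcc]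
      _ = k * q := by rw [hkd]
  have hdm : Commute d m := hdk_comm.mul_right hcd.symm
  refine ⟨m * star x, ?_, ?_⟩
  · calc star (m * star x) * (m * star x) = x * (m * m) * star x := by
          rw [star_mul, star_star, hm_star]; simp only [mul_assoc]
      _ = x * y * star (x * y) := by
          rw [hmm, mul_assoc, mul_assoc k, hqx, star_mul]; simp only [k, mul_assoc]
      _ = p := by rw [hxy, hp.isSelfAdjoint.star_eq, hp.isIdempotentElem.eq]
  · calc m * star x * star (m * star x) = m * (d * m) := by
          rw [star_mul, star_star, hm_star]; simp only [d, mul_assoc]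
      _ = k * (q * d) := by rw [hdm.eq, ← mul_assoc, hmm, mul_assoc]
      _ = q := by rw [hqd, hkd]

theorem exists_partialIsometry_of_mul_eq (hp : IsStarProjection p) (hq : IsStarProjection q)
    (hxy : x * y = p) (hyx : y * x = q) :
    ∃ v : A, star v * v = p ∧ v * star v = q := by
  refine exists_partialIsometry_of_mul_eq_of_corner (x := x * q) (y := y) hp hq ?_ ?_ ?_ ?_
  · rw [← hyx, ← mul_assoc x y x, hxy, mul_assoc, hxy, hp.isIdempotentElem.eq]
  · rw [← mul_assoc, hyx, hq.isIdempotentElem.eq]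
  · rw [← mul_assoc, ← hxy, mul_assoc x y x, hyx, mul_assoc, hq.isIdempotentElem.eq]
  · rw [mul_assoc, hq.isIdempotentElem.eq]

end NonUnital

theorem infinite_projection_of_infinite_idempotent_general
    {A : Type*} [NonUnitalCStarAlgebra A]
    (A₀ : NonUnitalSubalgebra ℂ A)
    (p : A) (hidem : p * p = p) (hsa : star p = p)
    (hinf : ∃ e s t : A, e ∈ A₀ ∧ s ∈ A₀ ∧ t ∈ A₀ ∧ e * e = e ∧
      s * t = p ∧ t * s = e ∧ e * p = e ∧ p * e = e ∧ e ≠ p) :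
    ∃ q v : A, q * q = q ∧ star q = q ∧ star v * v = p ∧ v * star v = q ∧
      p * q = q ∧ q * p = q ∧ q ≠ p := by
  obtain ⟨e, s, t, -, -, -, he, hst, hts, hep, hpe, hne⟩ := hinf
  obtain ⟨q, hq, heq, hqe⟩ := NonUnitalCStarAlgebra.exists_isStarProjection_of_isIdempotentElem he
  have hpq : p * q = q := by rw [← heq, ← mul_assoc, hpe]
  have hxy : s * q * (e * t) = p :=
    calc s * q * (e * t) = s * (q * e) * t := by simp only [mul_assoc]
      _ = s * t * (s * t) := by rw [hqe, ← hts]; simp only [mul_assoc]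
      _ = p := by rw [hst, hidem]
  have hyx : e * t * (s * q) = q :=
    calc e * t * (s * q) = e * (t * s) * q := by simp only [mul_assoc]
      _ = q := by rw [hts, he, heq]
  obtain ⟨v, hvv, hvv'⟩ := exists_partialIsometry_of_mul_eq ⟨hidem, hsa⟩ hq hxy hyx
  refine ⟨q, v, hq.isIdempotentElem, hq.isSelfAdjoint, hvv, hvv', hpq, ?_, ?_⟩
  · simpa only [star_mul, hsa, hq.isSelfAdjoint.star_eq] using congrArg star hpq
  · rintro rfl
    exact hne (hep.symm.trans heq)

/-- Lemma 2.4: let `A` be a C*-algebra and `A₀` a dense subalgebra.  If a projection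
`p ∈ A₀` is an infinite idempotent in `A₀` (there are an idempotent `e ∈ A₀` and
`s, t ∈ A₀` with `s * t = p`, `t * s = e`, `e * p = p * e = e` and `e ≠ p`), then `p` is
an infinite projection in `A`: there are a projection `q ∈ A` and `v ∈ A` with
`v* * v = p`, `v * v* = q`, `p * q = q * p = q` and `q ≠ p`. -/
theorem infinite_projection_of_infinite_idempotent
    {A : Type*} [NonUnitalCStarAlgebra A]
    (A₀ : NonUnitalSubalgebra ℂ A) (hdense : Dense (A₀ : Set A))
    (p : A) (hpA₀ : p ∈ A₀) (hidem : p * p = p) (hsa : star p = p)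
    (hinf : ∃ e s t : A, e ∈ A₀ ∧ s ∈ A₀ ∧ t ∈ A₀ ∧ e * e = e ∧
      s * t = p ∧ t * s = e ∧ e * p = e ∧ p * e = e ∧ e ≠ p) :
    ∃ q v : A, q * q = q ∧ star q = q ∧ star v * v = p ∧ v * star v = q ∧
      p * q = q ∧ q * p = q ∧ q ≠ p :=
  infinite_projection_of_infinite_idempotent_general A₀ p hidem hsa hinf
end

section
/- Let A be a (not necessarily unital) algebra over ℂ and let P be a set of idempotents of A such that for all p, q ∈ P there exists w ∈ P with w·p = p·w = p and w·q = q·w = q. Then the set B = { p·x·p : p ∈ P, x ∈ A } is closed under addition, negation, multiplication, and scalar multiplication (i.e., B is a non-unital subalgebra of A), and B is s-unital: for every b ∈ B there exists u ∈ B with u·b = b = b·u. -/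
/-- Abstract form of Lemma 4.1: if `P` is a set of idempotents of a complex algebra `A`
such that any two elements of `P` are dominated by a common element of `P`, then
`B = { p * x * p : p ∈ P, x ∈ A }` is a (non-unital) subalgebra of `A` which is s-unital,
with a single two-sided local unit for each element. -/
theorem corner_subalgebra_sUnital
    {A : Type*} [NonUnitalRing A] [Module ℂ A] [IsScalarTower ℂ A A] [SMulCommClass ℂ A A]
    (P : Set A) (hP : ∀ p ∈ P, p * p = p)
    (hdir : ∀ p ∈ P, ∀ q ∈ P, ∃ w ∈ P, w * p = p ∧ p * w = p ∧ w * q = q ∧ q * w = q) :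
    let B : Set A := {b | ∃ p ∈ P, ∃ x : A, b = p * x * p}
    (∀ b₁ ∈ B, ∀ b₂ ∈ B, b₁ + b₂ ∈ B) ∧
    (∀ b ∈ B, -b ∈ B) ∧
    (∀ b₁ ∈ B, ∀ b₂ ∈ B, b₁ * b₂ ∈ B) ∧
    (∀ (c : ℂ), ∀ b ∈ B, c • b ∈ B) ∧
    (∀ b ∈ B, ∃ u ∈ B, u * b = b ∧ b * u = b) := by
  intro B
  -- key: if w dominates p, then w * (p x p) * w = p x p
  have key : ∀ w p x : A, w * p = p → p * w = p → w * (p * x * p) * w = p * x * p := by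
    intro w p x h1 h2
    calc w * (p * x * p) * w = (w * p) * x * (p * w) := by noncomm_ring
    _ = p * x * p := by rw [h1, h2]
  refine ⟨?_, ?_, ?_, ?_, ?_⟩
  · rintro b₁ ⟨p, hp, x, rfl⟩ b₂ ⟨q, hq, y, rfl⟩
    obtain ⟨w, hw, wp, pw, wq, qw⟩ := hdir p hp q hq
    exact ⟨w, hw, p * x * p + q * y * q, by
      rw [mul_add, add_mul, key w p x wp pw, key w q y wq qw]⟩
  · rintro b ⟨p, hp, x, rfl⟩
    exact ⟨p, hp, -x, by noncomm_ring⟩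
  · rintro b₁ ⟨p, hp, x, rfl⟩ b₂ ⟨q, hq, y, rfl⟩
    obtain ⟨w, hw, wp, pw, wq, qw⟩ := hdir p hp q hq
    refine ⟨w, hw, (p * x * p) * (q * y * q), ?_⟩
    have l : w * (p * x * p) = p * x * p := by
      calc w * (p * x * p) = (w * p) * x * p := by noncomm_ring
        _ = p * x * p := by rw [wp]
    have r : (q * y * q) * w = q * y * q := by
      calc (q * y * q) * w = q * y * (q * w) := by noncomm_ring
        _ = q * y * q := by rw [qw]
    calc p * x * p * (q * y * q) = (w * (p * x * p)) * ((q * y * q) * w) := by rw [l, r]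
      _ = w * (p * x * p * (q * y * q)) * w := by noncomm_ring
  · rintro c b ⟨p, hp, x, rfl⟩
    exact ⟨p, hp, c • x, by simp [mul_smul_comm, smul_mul_assoc]⟩
  · rintro b ⟨p, hp, x, rfl⟩
    refine ⟨p, ⟨p, hp, p, by rw [hP p hp, hP p hp]⟩, ?_, ?_⟩
    · calc p * (p * x * p) = (p * p) * x * p := by noncomm_ring
        _ = p * x * p := by rw [hP p hp]
    · calc (p * x * p) * p = p * x * (p * p) := by noncomm_ring
        _ = p * x * p := by rw [hP p hp]
end

section
/- Let R be an s-unital ring and let u ∈ R be an algebraically properly infinite idempotent: u² = u and there exist matrices α ∈ M_{2×1}(R) and β ∈ M_{1×2}(R) such that the 2×2 diagonal matrix diag(u, u) equals α·(u)·β, where (u) is the 1×1 matrix with entry u. Then for every n ≥ 1 and all a₁, …, aₙ, b₁, …, bₙ ∈ R, the element x = Σᵢ aᵢ·u·bᵢ satisfies x ≾ u: there exist c, d ∈ R with x = c·u·d. -/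
/-- Abstract form of Lemma 4.4: if `u` is an algebraically properly infinite idempotent of
an s-unital ring `R` (i.e. `diag(u, u) = α ⬝ (u) ⬝ β` for some `α ∈ M_{2×1}(R)`,
`β ∈ M_{1×2}(R)`), then every element of the form `x = ∑ i, aᵢ * u * bᵢ` satisfies
`x ≾ u`: there are `c, d ∈ R` with `x = c * u * d`. -/
theorem sum_subequivalent_of_properlyInfinite
    {R : Type*} [NonUnitalRing R] (hR : IsSUnital R)
    (u : R) (hu : u * u = u)
    (hpi : ∃ (α : Matrix (Fin 2) (Fin 1) R) (β : Matrix (Fin 1) (Fin 2) R),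
      Matrix.diagonal ![u, u] = α * Matrix.of (fun _ _ : Fin 1 => u) * β)
    (n : ℕ) (hn : 1 ≤ n) (a b : Fin n → R) :
    ∃ c d : R, (∑ i, a i * u * b i) = c * u * d := by
  obtain ⟨α, β, h⟩ := hpi
  have entry : ∀ i j, (α * Matrix.of (fun _ _ : Fin 1 => u) * β) i j = α i 0 * u * β 0 j := by
    intro i j
    simp [Matrix.mul_apply, Fin.sum_univ_one]
  have h00 : α 0 0 * u * β 0 0 = u := by
    have := congrFun (congrFun h 0) 0
    rw [entry] at this
    simpa using this.symm
  have h11 : α 1 0 * u * β 0 1 = u := by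
    have := congrFun (congrFun h 1) 1
    rw [entry] at this
    simpa using this.symm
  have h01 : α 0 0 * u * β 0 1 = 0 := by
    have := congrFun (congrFun h 0) 1
    rw [entry] at this
    simpa using this.symm
  have h10 : α 1 0 * u * β 0 0 = 0 := by
    have := congrFun (congrFun h 1) 0
    rw [entry] at this
    simpa using this.symm
  clear h hn hR hu entry
  induction n with
  | zero => exact ⟨0, 0, by simp⟩
  | succ k ih =>
    obtain ⟨c, d, hcd⟩ := ih (fun i => a i.castSucc) (fun i => b i.castSucc)
    refine ⟨c * α 0 0 + a (Fin.last k) * α 1 0, β 0 0 * d + β 0 1 * b (Fin.last k), ?_⟩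
    have expand : ∀ c d x y : R,
        (c * α 0 0 + x * α 1 0) * u * (β 0 0 * d + β 0 1 * y)
          = c * (α 0 0 * u * β 0 0) * d + c * (α 0 0 * u * β 0 1) * y
            + x * (α 1 0 * u * β 0 0) * d + x * (α 1 0 * u * β 0 1) * y := by
      intros; noncomm_ring
    rw [Fin.sum_univ_castSucc, hcd, expand, h00, h01, h10, h11]
    simp [mul_assoc]
end

section
/- Let k ≥ 1 and let Λ be a row-finite, locally convex k-graph containing a return path with an entrance. Then there exists a boundary path x ∈ Λ^{≤∞} such that for every m ∈ ℕ^k with m ≤ d(x), there exist n ∈ ℕ^k with m ≤ n ≤ d(x) and p ∈ ℕ^k with n + p ≤ d(x) such that x(n, n+p) is a return path with an entrance. -/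
/-!
Starting from a return path with an entrance we build an infinite path `x = L₀ g₀ L₁ g₁ ⋯`
in which every `Lⱼ` is a return path with an entrance, so that every initial segment of `x`
is followed by one of them. Round `j` treats the direction `i = j mod k`. If `d(Lⱼ)ᵢ = 0`
and `s(Lⱼ)` receives an `eᵢ`-edge, let `δ` be an entrance of `Lⱼ` and `e` an `eᵢ`-edge at
`s(δ)`. Pulling edges back through `Lⱼ`, `F f = (Lⱼ f)(0, eᵢ)`, is a self-map of the finite
set `s(Lⱼ)Λ^{eᵢ}`, so the orbit of `(δ e)(0, eᵢ)` reaches some `g = Fˢ((δ e)(0, eᵢ))` with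
`Fᴺ g = g` and `s < N`. Then `Lⱼᴺ g = g L'` and `g ε = Lⱼˢ δ e` for some `L'` and `ε`,
where `L'` is a return path with entrance `ε`; take `gⱼ := g` and `Lⱼ₊₁ := L'`. Otherwise
`gⱼ` is trivial and `Lⱼ₊₁ := Lⱼ`. Local convexity carries "receives an `eᵢ`-edge" along
paths of degree `0` in direction `i`, which is what makes `x` satisfy the boundary condition.
-/

/-- A higher-rank graph (`k`-graph): a countable category `Λ` together with a degree
functor `d : Λ → ℕᵏ` satisfying the unique factorisation property.  Paths compose in the
convention `comp l m` is defined when `src l = rng m`, with range `rng l` and source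
`src m`. -/
structure KGraph (k : ℕ) where
  /-- The objects (vertices). -/
  Obj : Type
  /-- The morphisms (paths). -/
  Path : Type
  obj_countable : Countable Obj
  path_countable : Countable Path
  /-- The source (domain) of a path. -/
  src : Path → Obj
  /-- The range (codomain) of a path. -/
  rng : Path → Obj
  /-- The identity path at a vertex. -/
  ident : Obj → Path
  /-- Composition `l ∘ m`, defined when `src l = rng m`. -/
  comp : (l m : Path) → src l = rng m → Path
  src_ident : ∀ v, src (ident v) = v
  rng_ident : ∀ v, rng (ident v) = v
  src_comp : ∀ l m h, src (comp l m h) = src m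
  rng_comp : ∀ l m h, rng (comp l m h) = rng l
  comp_ident : ∀ l h, comp l (ident (src l)) h = l
  ident_comp : ∀ l h, comp (ident (rng l)) l h = l
  comp_assoc : ∀ l m n (h₁ : src l = rng m) (h₂ : src m = rng n)
    (h₃ : src (comp l m h₁) = rng n) (h₄ : src l = rng (comp m n h₂)),
    comp (comp l m h₁) n h₃ = comp l (comp m n h₂) h₄
  /-- The degree functor. -/
  d : Path → Fin k → ℕ
  d_ident : ∀ v, d (ident v) = 0
  d_comp : ∀ l m h, d (comp l m h) = d l + d m
  /-- Unique factorisation property: existence. -/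
  factor : ∀ (l : Path) (m n : Fin k → ℕ), d l = m + n →
    ∃ (μ ν : Path) (h : src μ = rng ν), d μ = m ∧ d ν = n ∧ comp μ ν h = l
  /-- Unique factorisation property: uniqueness. -/
  factor_unique : ∀ (μ ν μ' ν' : Path) (h : src μ = rng ν) (h' : src μ' = rng ν'),
    d μ = d μ' → comp μ ν h = comp μ' ν' h' → μ = μ' ∧ ν = ν'

namespace KGraph

variable {k : ℕ} (Λ : KGraph k)

/-- The initial segment `l(0, m)` of a path `l`, for `m ≤ d l`. -/
noncomputable def initSeg (l : Λ.Path) (m : Fin k → ℕ) (h : ∀ i, m i ≤ Λ.d l i) :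
    Λ.Path :=
  (Λ.factor l m (fun i => Λ.d l i - m i)
    (by funext i; have := h i; show Λ.d l i = m i + (Λ.d l i - m i); omega)).choose

/-- A return path: a path whose range equals its source. -/
def IsReturnPath (α : Λ.Path) : Prop := Λ.rng α = Λ.src α

/-- A path `α` has an entrance if there is `δ ∈ s(α)Λ` with `d δ ≤ d α` and
`α(0, d δ) ≠ δ`. -/
def HasEntrance (α : Λ.Path) : Prop :=
  ∃ (δ : Λ.Path) (hle : ∀ i, Λ.d δ i ≤ Λ.d α i),
    Λ.rng δ = Λ.src α ∧ Λ.initSeg α (Λ.d δ) hle ≠ δ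

/-- Row-finiteness: `vΛⁿ` is finite for every vertex `v` and degree `n`. -/
def RowFinite : Prop :=
  ∀ (v : Λ.Obj) (n : Fin k → ℕ), {l : Λ.Path | Λ.rng l = v ∧ Λ.d l = n}.Finite

/-- Local convexity. -/
def LocallyConvex : Prop :=
  ∀ (i j : Fin k), i ≠ j → ∀ (l m : Λ.Path), Λ.rng l = Λ.rng m →
    Λ.d l = Pi.single i 1 → Λ.d m = Pi.single j 1 →
    (∃ l', Λ.rng l' = Λ.src l ∧ Λ.d l' = Pi.single j 1) ∧
    (∃ m', Λ.rng m' = Λ.src m ∧ Λ.d m' = Pi.single i 1)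

end KGraph

namespace KGraph

variable {k : ℕ}

/-- A boundary path `x ∈ Λ^{≤∞}` of a row-finite locally convex `k`-graph: a
degree-preserving functor `x : Ω_{k,m} → Λ` (for some `m = deg ∈ (ℕ ∪ {∞})ᵏ`) such that
whenever `p ≤ m` and `p + eᵢ ≰ m`, the set `x(p)Λ^{eᵢ}` is empty. -/
structure BoundaryPath (Λ : KGraph k) where
  /-- The degree `d(x) ∈ (ℕ ∪ {∞})ᵏ`. -/
  deg : Fin k → ℕ∞
  /-- The image `x(p)` of the object `p ≤ deg`. -/
  vert : (p : Fin k → ℕ) → (∀ i, (p i : ℕ∞) ≤ deg i) → Λ.Obj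
  /-- The image `x(p, q)` of the morphism `(p, q)` with `p ≤ q ≤ deg`. -/
  map : (p q : Fin k → ℕ) → (∀ i, p i ≤ q i) → (∀ i, (q i : ℕ∞) ≤ deg i) → Λ.Path
  rng_map : ∀ p q hpq hq, Λ.rng (map p q hpq hq) =
    vert p (fun i => le_trans (by exact_mod_cast hpq i) (hq i))
  src_map : ∀ p q hpq hq, Λ.src (map p q hpq hq) = vert q hq
  d_map : ∀ p q hpq hq, Λ.d (map p q hpq hq) = fun i => q i - p i
  map_self : ∀ p hp, map p p (fun i => le_refl _) hp = Λ.ident (vert p hp)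
  map_comp : ∀ p q r hpq hqr hq hr
    (hcomp : Λ.src (map p q hpq hq) = Λ.rng (map q r hqr hr)),
    Λ.comp (map p q hpq hq) (map q r hqr hr) hcomp =
      map p r (fun i => le_trans (hpq i) (hqr i)) hr
  /-- The boundary condition: if `p ≤ deg` but `p + eᵢ ≰ deg`, then `x(p)Λ^{eᵢ} = ∅`. -/
  boundary : ∀ p (hp : ∀ i, (p i : ℕ∞) ≤ deg i) (i : Fin k),
    ¬ ((p i : ℕ∞) + 1 ≤ deg i) →
    ¬ ∃ l : Λ.Path, Λ.rng l = vert p hp ∧ Λ.d l = Pi.single i 1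

end KGraph

lemma ENat.natCast_le_iSup_natCast_iff {ι : Type*} [Nonempty ι] {f : ι → ℕ} {q : ℕ} :
    (q : ℕ∞) ≤ ⨆ n, (f n : ℕ∞) ↔ ∃ n, q ≤ f n := by
  cases q with
  | zero => simp
  | succ r =>
    rw [Nat.cast_succ, ENat.add_one_le_iff (ENat.natCast_ne_top r), lt_iSup_iff]
    simp only [Nat.cast_lt, Nat.succ_le_iff]

lemma Function.exists_lt_isPeriodicPt_iterate {β : Type*} [Finite β] (f : β → β) (b : β) :
    ∃ s N, s < N ∧ Function.IsPeriodicPt f N (f^[s] b) := by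
  obtain ⟨m, n, hmn, h⟩ := Finite.exists_ne_map_eq_of_infinite (fun t : ℕ => f^[t] b)
  wlog hlt : m < n generalizing m n
  · exact this n m hmn.symm h.symm (by omega)
  have hP : Function.IsPeriodicPt f (n - m) (f^[m] b) := by
    change f^[n - m] (f^[m] b) = f^[m] b
    rw [← Function.iterate_add_apply, Nat.sub_add_cancel hlt.le]
    exact h.symm
  exact ⟨m, (n - m) * (m + 1),
    (Nat.lt_succ_self m).trans_le (Nat.le_mul_of_pos_left _ (Nat.sub_pos_of_lt hlt)),
    hP.mul_const _⟩

namespace KGraph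

variable {k : ℕ} {Λ : KGraph k}

section Factorisation

variable {l μ ν : Λ.Path} {m n p q : Fin k → ℕ}

lemma comp_congr {μ' ν' : Λ.Path} (hμ : μ = μ') (hν : ν = ν') {hc : Λ.src μ = Λ.rng ν} :
    Λ.comp μ ν hc = Λ.comp μ' ν' (hμ ▸ hν ▸ hc) := by
  subst hμ hν; rfl

lemma d_eq_add_sub (h : ∀ i, m i ≤ Λ.d l i) : Λ.d l = m + fun i => Λ.d l i - m i :=
  funext fun i => (Nat.add_sub_cancel' (h i)).symm

variable (Λ) in
/-- The tail `l(m, d l)`. -/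
noncomputable def tailSeg (l : Λ.Path) (m : Fin k → ℕ) (h : ∀ i, m i ≤ Λ.d l i) : Λ.Path :=
  (Λ.factor l m _ (d_eq_add_sub h)).choose_spec.choose

lemma src_initSeg (h : ∀ i, m i ≤ Λ.d l i) :
    Λ.src (Λ.initSeg l m h) = Λ.rng (Λ.tailSeg l m h) :=
  (Λ.factor l m _ (d_eq_add_sub h)).choose_spec.choose_spec.choose

lemma d_initSeg (h : ∀ i, m i ≤ Λ.d l i) : Λ.d (Λ.initSeg l m h) = m :=
  (Λ.factor l m _ (d_eq_add_sub h)).choose_spec.choose_spec.choose_spec.1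

lemma d_tailSeg (h : ∀ i, m i ≤ Λ.d l i) :
    Λ.d (Λ.tailSeg l m h) = fun i => Λ.d l i - m i :=
  (Λ.factor l m _ (d_eq_add_sub h)).choose_spec.choose_spec.choose_spec.2.1

lemma comp_initSeg_tailSeg (h : ∀ i, m i ≤ Λ.d l i) (hc) :
    Λ.comp (Λ.initSeg l m h) (Λ.tailSeg l m h) hc = l :=
  (Λ.factor l m _ (d_eq_add_sub h)).choose_spec.choose_spec.choose_spec.2.2

lemma rng_initSeg (h : ∀ i, m i ≤ Λ.d l i) : Λ.rng (Λ.initSeg l m h) = Λ.rng l := by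
  conv_rhs => rw [← comp_initSeg_tailSeg h (src_initSeg h), Λ.rng_comp]

lemma src_tailSeg (h : ∀ i, m i ≤ Λ.d l i) : Λ.src (Λ.tailSeg l m h) = Λ.src l := by
  conv_rhs => rw [← comp_initSeg_tailSeg h (src_initSeg h), Λ.src_comp]

lemma d_le_d_comp_left (hc : Λ.src μ = Λ.rng ν) : ∀ i, Λ.d μ i ≤ Λ.d (Λ.comp μ ν hc) i := by
  simp [Λ.d_comp]

lemma initSeg_eq_and_tailSeg_eq_of_comp {hc : Λ.src μ = Λ.rng ν} (hl : Λ.comp μ ν hc = l)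
    (hm : Λ.d μ = m) (h : ∀ i, m i ≤ Λ.d l i) :
    Λ.initSeg l m h = μ ∧ Λ.tailSeg l m h = ν :=
  Λ.factor_unique _ _ _ _ (src_initSeg h) hc (by rw [d_initSeg, hm])
    (by rw [comp_initSeg_tailSeg, hl])

lemma initSeg_eq_of_comp {hc : Λ.src μ = Λ.rng ν} (hl : Λ.comp μ ν hc = l)
    (hm : Λ.d μ = m) (h : ∀ i, m i ≤ Λ.d l i) : Λ.initSeg l m h = μ :=
  (initSeg_eq_and_tailSeg_eq_of_comp hl hm h).1

lemma tailSeg_eq_of_comp {hc : Λ.src μ = Λ.rng ν} (hl : Λ.comp μ ν hc = l)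
    (hm : Λ.d μ = m) (h : ∀ i, m i ≤ Λ.d l i) : Λ.tailSeg l m h = ν :=
  (initSeg_eq_and_tailSeg_eq_of_comp hl hm h).2

lemma comp_left_cancel {ν' : Λ.Path} {hc : Λ.src μ = Λ.rng ν} {hc' : Λ.src μ = Λ.rng ν'}
    (h : Λ.comp μ ν hc = Λ.comp μ ν' hc') : ν = ν' :=
  (Λ.factor_unique _ _ _ _ hc hc' rfl h).2

lemma eq_ident_of_d_eq_zero (h : Λ.d l = 0) : l = Λ.ident (Λ.rng l) :=
  (Λ.factor_unique _ _ _ _ (Λ.rng_ident _).symm (Λ.src_ident _) (by rw [Λ.d_ident, h])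
    ((Λ.comp_ident l _).trans (Λ.ident_comp l _).symm)).1

lemma initSeg_of_eq_d (hm : m = Λ.d l) (h : ∀ i, m i ≤ Λ.d l i) : Λ.initSeg l m h = l :=
  initSeg_eq_of_comp (Λ.comp_ident l (Λ.rng_ident _).symm) hm.symm h

lemma initSeg_comp_of_le {hc : Λ.src μ = Λ.rng ν} (hl : Λ.comp μ ν hc = l)
    (h : ∀ i, m i ≤ Λ.d μ i) (h' : ∀ i, m i ≤ Λ.d l i) :
    Λ.initSeg l m h' = Λ.initSeg μ m h := by
  have hc' : Λ.src (Λ.tailSeg μ m h) = Λ.rng ν := (src_tailSeg h).trans hc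
  refine initSeg_eq_of_comp (ν := Λ.comp (Λ.tailSeg μ m h) ν hc')
    (hc := by rw [Λ.rng_comp]; exact src_initSeg h) ?_ (d_initSeg h) h'
  rw [← Λ.comp_assoc _ _ _ (src_initSeg h) hc' (by rw [Λ.src_comp]; exact hc')]
  exact (comp_congr (comp_initSeg_tailSeg h _) rfl).trans hl

lemma tailSeg_congr {l' : Λ.Path} (hl : l = l') {h : ∀ i, m i ≤ Λ.d l i} :
    Λ.tailSeg l m h = Λ.tailSeg l' m (hl ▸ h) := by
  subst hl; rfl

lemma initSeg_initSeg (hn : ∀ i, n i ≤ Λ.d l i) (hm : ∀ i, m i ≤ Λ.d (Λ.initSeg l n hn) i)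
    (hm' : ∀ i, m i ≤ Λ.d l i) : Λ.initSeg (Λ.initSeg l n hn) m hm = Λ.initSeg l m hm' :=
  (initSeg_comp_of_le (comp_initSeg_tailSeg hn (src_initSeg hn)) hm hm').symm

lemma comp_tailSeg_initSeg_tailSeg (hq : ∀ i, q i ≤ Λ.d l i)
    (hp : ∀ i, p i ≤ Λ.d (Λ.initSeg l q hq) i) (hp' : ∀ i, p i ≤ Λ.d l i) (hc) :
    Λ.comp (Λ.tailSeg (Λ.initSeg l q hq) p hp) (Λ.tailSeg l q hq) hc = Λ.tailSeg l p hp' := by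
  refine (tailSeg_eq_of_comp (μ := Λ.initSeg (Λ.initSeg l q hq) p hp)
    (hc := by rw [Λ.rng_comp]; exact src_initSeg hp) ?_ (d_initSeg hp) hp').symm
  rw [← Λ.comp_assoc _ _ _ (src_initSeg hp) hc (by rw [Λ.src_comp]; exact hc)]
  exact (comp_congr (comp_initSeg_tailSeg hp _) rfl).trans
    (comp_initSeg_tailSeg hq (src_initSeg hq))

end Factorisation

section Segments

variable {l μ ν : Λ.Path} {p q r : Fin k → ℕ}

variable (Λ) in
/-- The factor `l(p, q)`. -/
noncomputable def seg (l : Λ.Path) (p q : Fin k → ℕ) (hpq : ∀ i, p i ≤ q i)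
    (hq : ∀ i, q i ≤ Λ.d l i) : Λ.Path :=
  Λ.tailSeg (Λ.initSeg l q hq) p (by rw [d_initSeg]; exact hpq)

lemma d_seg (hpq : ∀ i, p i ≤ q i) (hq : ∀ i, q i ≤ Λ.d l i) :
    Λ.d (Λ.seg l p q hpq hq) = fun i => q i - p i := by
  simp only [seg, d_tailSeg, d_initSeg]

lemma rng_seg (hpq : ∀ i, p i ≤ q i) (hq : ∀ i, q i ≤ Λ.d l i) (hp : ∀ i, p i ≤ Λ.d l i) :
    Λ.rng (Λ.seg l p q hpq hq) = Λ.src (Λ.initSeg l p hp) := by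
  rw [seg, ← src_initSeg, initSeg_initSeg]

lemma src_seg (hpq : ∀ i, p i ≤ q i) (hq : ∀ i, q i ≤ Λ.d l i) :
    Λ.src (Λ.seg l p q hpq hq) = Λ.src (Λ.initSeg l q hq) :=
  src_tailSeg _

lemma seg_self (hp : ∀ i, p i ≤ Λ.d l i) :
    Λ.seg l p p (fun _ => le_rfl) hp = Λ.ident (Λ.src (Λ.initSeg l p hp)) := by
  have hd : Λ.d (Λ.seg l p p (fun _ => le_rfl) hp) = 0 := by
    rw [d_seg]; exact funext fun _ => Nat.sub_self _
  rw [eq_ident_of_d_eq_zero hd, rng_seg]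

lemma seg_comp (hpq : ∀ i, p i ≤ q i) (hqr : ∀ i, q i ≤ r i) (hq : ∀ i, q i ≤ Λ.d l i)
    (hr : ∀ i, r i ≤ Λ.d l i) (hc) :
    Λ.comp (Λ.seg l p q hpq hq) (Λ.seg l q r hqr hr) hc =
      Λ.seg l p r (fun i => (hpq i).trans (hqr i)) hr := by
  have hq' : ∀ i, q i ≤ Λ.d (Λ.initSeg l r hr) i := by rw [d_initSeg]; exact hqr
  have hp' : ∀ i, p i ≤ Λ.d (Λ.initSeg (Λ.initSeg l r hr) q hq') i := by
    rw [d_initSeg]; exact hpq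
  have hseg : Λ.seg l p q hpq hq = Λ.tailSeg (Λ.initSeg (Λ.initSeg l r hr) q hq') p hp' :=
    tailSeg_congr (initSeg_initSeg hr hq' hq).symm
  exact (comp_congr hseg rfl).trans
    (comp_tailSeg_initSeg_tailSeg hq' hp' _ (by rw [← hseg]; exact hc))

lemma seg_eq_of_comp {hc : Λ.src μ = Λ.rng ν} (hl : Λ.comp μ ν hc = l) (hp : Λ.d μ = p)
    (hpq : ∀ i, p i ≤ q i) (hq : ∀ i, q i ≤ Λ.d l i) (hql : q = Λ.d l) :
    Λ.seg l p q hpq hq = ν :=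
  (tailSeg_congr (initSeg_of_eq_d hql hq)).trans
    (tailSeg_eq_of_comp hl hp _)

end Segments

variable (Λ) in
def IsPrefix (μ l : Λ.Path) : Prop := ∃ ν hc, Λ.comp μ ν hc = l

section IsPrefix

variable {l l' μ ν : Λ.Path} {m p q : Fin k → ℕ}

lemma isPrefix_refl (l : Λ.Path) : Λ.IsPrefix l l :=
  ⟨_, _, Λ.comp_ident l (Λ.rng_ident _).symm⟩

lemma isPrefix_comp (hc : Λ.src μ = Λ.rng ν) : Λ.IsPrefix μ (Λ.comp μ ν hc) := ⟨ν, hc, rfl⟩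

lemma IsPrefix.trans (h : Λ.IsPrefix μ l) (h' : Λ.IsPrefix l l') : Λ.IsPrefix μ l' := by
  obtain ⟨ν, hc, rfl⟩ := h
  obtain ⟨ν', hc', rfl⟩ := h'
  have hc'' : Λ.src ν = Λ.rng ν' := by rw [← hc', Λ.src_comp]
  exact ⟨Λ.comp ν ν' hc'', by rw [Λ.rng_comp]; exact hc,
    (Λ.comp_assoc _ _ _ hc hc'' hc' _).symm⟩

lemma isPrefix_initSeg (h : ∀ i, m i ≤ Λ.d l i) : Λ.IsPrefix (Λ.initSeg l m h) l :=
  ⟨_, _, comp_initSeg_tailSeg h (src_initSeg h)⟩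

lemma IsPrefix.comp_left (h : Λ.IsPrefix μ l) {hc : Λ.src ν = Λ.rng μ}
    (hc' : Λ.src ν = Λ.rng l) : Λ.IsPrefix (Λ.comp ν μ hc) (Λ.comp ν l hc') := by
  obtain ⟨ρ, hρ, rfl⟩ := h
  exact ⟨ρ, by rw [Λ.src_comp]; exact hρ, Λ.comp_assoc _ _ _ _ _ _ _⟩

lemma IsPrefix.eq_of_d_eq {μ' : Λ.Path} (h : Λ.IsPrefix μ l) (h' : Λ.IsPrefix μ' l)
    (hd : Λ.d μ = Λ.d μ') : μ = μ' := by
  obtain ⟨ν, hc, hl⟩ := h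
  obtain ⟨ν', hc', rfl⟩ := h'
  exact (Λ.factor_unique _ _ _ _ hc hc' hd hl).1

lemma IsPrefix.d_le (h : Λ.IsPrefix μ l) : ∀ i, Λ.d μ i ≤ Λ.d l i := by
  obtain ⟨ν, hc, rfl⟩ := h
  exact d_le_d_comp_left hc

lemma IsPrefix.initSeg_eq (h : Λ.IsPrefix μ l) (hm : ∀ i, m i ≤ Λ.d μ i)
    (hm' : ∀ i, m i ≤ Λ.d l i) : Λ.initSeg l m hm' = Λ.initSeg μ m hm := by
  obtain ⟨ν, hc, rfl⟩ := h
  exact initSeg_comp_of_le rfl hm hm'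

lemma IsPrefix.seg_eq (h : Λ.IsPrefix μ l) (hpq : ∀ i, p i ≤ q i) (hq : ∀ i, q i ≤ Λ.d μ i)
    (hq' : ∀ i, q i ≤ Λ.d l i) : Λ.seg l p q hpq hq' = Λ.seg μ p q hpq hq :=
  tailSeg_congr (h.initSeg_eq hq hq')

end IsPrefix

variable (Λ) in
/-- `vΛ^{eᵢ}` is nonempty. -/
def Receives (v : Λ.Obj) (i : Fin k) : Prop := ∃ f : Λ.Path, Λ.rng f = v ∧ Λ.d f = Pi.single i 1

lemma LocallyConvex.receives_src_of_d_eq_single (hlc : Λ.LocallyConvex) {η : Λ.Path} {i j : Fin k}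
    (hij : i ≠ j) (hη : Λ.d η = Pi.single j 1) (h : Λ.Receives (Λ.rng η) i) :
    Λ.Receives (Λ.src η) i := by
  obtain ⟨f, hf, hdf⟩ := h
  exact (hlc i j hij f η hf hdf hη).2

lemma LocallyConvex.receives_src (hlc : Λ.LocallyConvex) {ξ : Λ.Path} {i : Fin k}
    (hξ : Λ.d ξ i = 0) (h : Λ.Receives (Λ.rng ξ) i) : Λ.Receives (Λ.src ξ) i := by
  induction hd : Λ.d ξ using WellFoundedLT.induction generalizing ξ with
  | _ n ih =>
  subst hd
  by_cases hn : Λ.d ξ = 0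
  · rwa [eq_ident_of_d_eq_zero hn, Λ.src_ident]
  obtain ⟨j, hj⟩ : ∃ j, Λ.d ξ j ≠ 0 := by
    by_contra! h0; exact hn (funext h0)
  have hle : ∀ i', (Pi.single j 1 : Fin k → ℕ) i' ≤ Λ.d ξ i' := by
    intro i'
    rcases eq_or_ne i' j with rfl | h'
    · simp only [Pi.single_eq_same]; omega
    · simp [Pi.single_eq_of_ne h']
  have hij : i ≠ j := by rintro rfl; exact hj hξ
  refine src_tailSeg hle ▸ ih _ ?_ ?_ ?_ (d_tailSeg hle)
  · refine Pi.lt_def.2 ⟨fun i' => Nat.sub_le _ _, j, ?_⟩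
    simp only [Pi.single_eq_same]; omega
  · simp [d_tailSeg, hξ]
  · rw [← src_initSeg hle]
    exact hlc.receives_src_of_d_eq_single hij (d_initSeg hle) (by rwa [rng_initSeg])

/-- An increasing sequence of paths; its union is a (possibly infinite) path `Ω_{k,m} → Λ`. -/
structure PrefixChain (Λ : KGraph k) where
  path : ℕ → Λ.Path
  isPrefix_succ : ∀ n, Λ.IsPrefix (path n) (path (n + 1))

namespace PrefixChain

variable (c : PrefixChain Λ) {n n' : ℕ} {p q r : Fin k → ℕ} {L g : ℕ → Λ.Path}

lemma isPrefix_of_le (h : n ≤ n') : Λ.IsPrefix (c.path n) (c.path n') := by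
  induction n', h using Nat.le_induction with
  | base => exact isPrefix_refl _
  | succ n' _ ih => exact ih.trans (c.isPrefix_succ n')

noncomputable def deg (i : Fin k) : ℕ∞ := ⨆ n, (Λ.d (c.path n) i : ℕ∞)

lemma natCast_le_deg_iff {i : Fin k} {m : ℕ} : (m : ℕ∞) ≤ c.deg i ↔ ∃ n, m ≤ Λ.d (c.path n) i :=
  ENat.natCast_le_iSup_natCast_iff

lemma exists_le_d (hq : ∀ i, (q i : ℕ∞) ≤ c.deg i) : ∃ n, ∀ i, q i ≤ Λ.d (c.path n) i := by
  choose N hN using fun i => c.natCast_le_deg_iff.1 (hq i)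
  exact ⟨Finset.univ.sup N, fun i =>
    (hN i).trans ((c.isPrefix_of_le (Finset.le_sup (Finset.mem_univ i))).d_le i)⟩

noncomputable def vert (p : Fin k → ℕ) (hp : ∀ i, (p i : ℕ∞) ≤ c.deg i) : Λ.Obj :=
  Λ.src (Λ.initSeg (c.path (c.exists_le_d hp).choose) p (c.exists_le_d hp).choose_spec)

noncomputable def map (p q : Fin k → ℕ) (hpq : ∀ i, p i ≤ q i)
    (hq : ∀ i, (q i : ℕ∞) ≤ c.deg i) : Λ.Path :=
  Λ.seg (c.path (c.exists_le_d hq).choose) p q hpq (c.exists_le_d hq).choose_spec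

lemma initSeg_path_eq (hp : ∀ i, p i ≤ Λ.d (c.path n) i) (hp' : ∀ i, p i ≤ Λ.d (c.path n') i) :
    Λ.initSeg (c.path n) p hp = Λ.initSeg (c.path n') p hp' := by
  rcases le_total n n' with h | h
  · exact ((c.isPrefix_of_le h).initSeg_eq hp hp').symm
  · exact (c.isPrefix_of_le h).initSeg_eq hp' hp

lemma vert_eq {hp : ∀ i, (p i : ℕ∞) ≤ c.deg i} (hn : ∀ i, p i ≤ Λ.d (c.path n) i) :
    c.vert p hp = Λ.src (Λ.initSeg (c.path n) p hn) := by
  rw [vert, c.initSeg_path_eq _ hn]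

lemma map_eq {hpq : ∀ i, p i ≤ q i} {hq : ∀ i, (q i : ℕ∞) ≤ c.deg i}
    (hn : ∀ i, q i ≤ Λ.d (c.path n) i) : c.map p q hpq hq = Λ.seg (c.path n) p q hpq hn := by
  unfold map seg
  exact tailSeg_congr (c.initSeg_path_eq _ hn)

noncomputable def toBoundaryPath
    (hb : ∀ p hp i, ¬ ((p i : ℕ∞) + 1 ≤ c.deg i) → ¬ Λ.Receives (c.vert p hp) i) :
    Λ.BoundaryPath where
  deg := c.deg
  vert := c.vert
  map := c.map
  rng_map p q hpq hq := by
    obtain ⟨n, hn⟩ := c.exists_le_d hq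
    rw [c.map_eq hn, rng_seg _ _ fun i => (hpq i).trans (hn i), c.vert_eq]
  src_map p q hpq hq := by
    obtain ⟨n, hn⟩ := c.exists_le_d hq
    rw [c.map_eq hn, src_seg, c.vert_eq]
  d_map p q hpq hq := by
    obtain ⟨n, hn⟩ := c.exists_le_d hq
    rw [c.map_eq hn, d_seg]
  map_self p hp := by
    obtain ⟨n, hn⟩ := c.exists_le_d hp
    rw [c.map_eq hn, seg_self, c.vert_eq]
  map_comp p q r hpq hqr hq hr hc := by
    obtain ⟨n, hn⟩ := c.exists_le_d hr
    have hqn : ∀ i, q i ≤ Λ.d (c.path n) i := fun i => (hqr i).trans (hn i)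
    exact (comp_congr (c.map_eq hqn) (c.map_eq hn)).trans ((seg_comp _ _ _ _
      (by rw [← c.map_eq hqn, ← c.map_eq hn]; exact hc)).trans (c.map_eq hn).symm)
  boundary := hb

/-- The composites `e₀ ⋯ eₙ₋₁` of a composable sequence of paths. -/
noncomputable def composite (e : ℕ → Λ.Path) (he : ∀ n, Λ.src (e n) = Λ.rng (e (n + 1))) :
    (n : ℕ) → {l : Λ.Path // Λ.src l = Λ.rng (e n)}
  | 0 => ⟨Λ.ident (Λ.rng (e 0)), Λ.src_ident _⟩
  | n + 1 => ⟨Λ.comp (composite e he n).1 (e n) (composite e he n).2,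
      (Λ.src_comp _ _ _).trans (he n)⟩

noncomputable def ofComposable (e : ℕ → Λ.Path) (he : ∀ n, Λ.src (e n) = Λ.rng (e (n + 1))) :
    PrefixChain Λ where
  path n := (composite e he n).1
  isPrefix_succ _ := isPrefix_comp _

lemma exists_map_eq_of_path_succ
    (hpath : ∀ j, ∃ hLg hc, c.path (j + 1) = Λ.comp (c.path j) (Λ.comp (L j) (g j) hLg) hc)
    (j : ℕ) :
    ∃ hnp : ∀ i, ((Λ.d (c.path j) i + Λ.d (L j) i : ℕ) : ℕ∞) ≤ c.deg i,
      c.map (Λ.d (c.path j)) (fun i => Λ.d (c.path j) i + Λ.d (L j) i)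
        (fun _ => Nat.le_add_right _ _) hnp = L j := by
  obtain ⟨hLg, hc, hsucc⟩ := hpath j
  have hpre : Λ.IsPrefix (Λ.comp (c.path j) (L j) (hc.trans (Λ.rng_comp _ _ _)))
      (c.path (j + 1)) := hsucc ▸ (isPrefix_comp hLg).comp_left _
  have hle : ∀ i, Λ.d (c.path j) i + Λ.d (L j) i ≤ Λ.d (c.path (j + 1)) i := by
    simpa [Λ.d_comp] using hpre.d_le
  refine ⟨fun i => c.natCast_le_deg_iff.2 ⟨j + 1, hle i⟩, ?_⟩
  rw [c.map_eq hle, hpre.seg_eq _ (by simp [Λ.d_comp])]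
  exact seg_eq_of_comp rfl rfl _ _ (by funext i; simp [Λ.d_comp])

lemma not_receives_of_path_succ
    (hpath : ∀ j, ∃ hLg hc, c.path (j + 1) = Λ.comp (c.path j) (Λ.comp (L j) (g j) hLg) hc)
    (hlc : Λ.LocallyConvex) (hL : ∀ j, Λ.IsReturnPath (L j))
    (hstep : ∀ i n, ∃ j ≥ n, Λ.d (L j) i = 0 → Λ.Receives (Λ.src (L j)) i →
      Λ.d (g j) = Pi.single i 1)
    (p : Fin k → ℕ) (hp : ∀ i, (p i : ℕ∞) ≤ c.deg i) (i : Fin k)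
    (hpi : ¬ ((p i : ℕ∞) + 1 ≤ c.deg i)) :
    ¬ Λ.Receives (c.vert p hp) i := by
  intro hv
  -- From `n₀` on the chain no longer grows in direction `i`, but local convexity carries the
  -- `eᵢ`-edge at `x(p)` to every later `s(Lⱼ)`, so some later step adds an `eᵢ`-edge.
  obtain ⟨n₀, hn₀⟩ := c.exists_le_d hp
  have hstable : ∀ j ≥ n₀, Λ.d (c.path j) i = p i := fun j hj =>
    le_antisymm (by
      by_contra! h
      exact hpi (by exact_mod_cast c.natCast_le_deg_iff.2 ⟨j, h⟩))
      ((hn₀ i).trans ((c.isPrefix_of_le hj).d_le i))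
  obtain ⟨j, hj, hgj⟩ := hstep i n₀
  have hpj : ∀ i, p i ≤ Λ.d (c.path j) i := fun i => (hn₀ i).trans ((c.isPrefix_of_le hj).d_le i)
  obtain ⟨hLg, hc, hsucc⟩ := hpath j
  have hdj := congrFun (congrArg Λ.d hsucc) i
  simp only [Λ.d_comp, Pi.add_apply, hstable j hj, hstable (j + 1) (by omega)] at hdj
  have hrec : Λ.Receives (Λ.src (L j)) i := by
    rw [← hL j, ← Λ.rng_comp _ _ hLg, ← hc, ← src_tailSeg hpj]
    refine hlc.receives_src (by simp [d_tailSeg, hstable j hj]) ?_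
    rwa [← src_initSeg hpj, ← c.vert_eq]
  have := congrFun (hgj (by omega) hrec) i
  simp only [Pi.single_eq_same] at this
  omega

end PrefixChain

lemma single_le_d_comp {μ f : Λ.Path} {i : Fin k} (hf : Λ.d f = Pi.single i 1)
    (hc : Λ.src μ = Λ.rng f) : ∀ j, (Pi.single i 1 : Fin k → ℕ) j ≤ Λ.d (Λ.comp μ f hc) j := by
  simp [Λ.d_comp, hf]

variable (Λ) in
abbrev Edges (v : Λ.Obj) (i : Fin k) : Type :=
  {f : Λ.Path // Λ.rng f = v ∧ Λ.d f = Pi.single i 1}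

variable (Λ) in
/-- `vΛv` as a monoid under composition. -/
@[ext]
structure End (v : Λ.Obj) where
  val : Λ.Path
  rng_val : Λ.rng val = v
  src_val : Λ.src val = v

namespace End

variable {v : Λ.Obj} {i : Fin k}

instance : Monoid (Λ.End v) where
  mul a b := ⟨Λ.comp a.val b.val (a.src_val.trans b.rng_val.symm),
    (Λ.rng_comp _ _ _).trans a.rng_val, (Λ.src_comp _ _ _).trans b.src_val⟩
  one := ⟨Λ.ident v, Λ.rng_ident v, Λ.src_ident v⟩
  mul_assoc a b c := End.ext (Λ.comp_assoc _ _ _ _ _ _ _)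
  one_mul a := End.ext (by obtain ⟨l, rfl, -⟩ := a; exact Λ.ident_comp l _)
  mul_one a := End.ext (by obtain ⟨l, -, rfl⟩ := a; exact Λ.comp_ident l _)

lemma mul_val (a b : Λ.End v) :
    (a * b).val = Λ.comp a.val b.val (a.src_val.trans b.rng_val.symm) := rfl

lemma one_val : (1 : Λ.End v).val = Λ.ident v := rfl

lemma d_pow (a : Λ.End v) (n : ℕ) : Λ.d (a ^ n).val = n • Λ.d a.val := by
  induction n with
  | zero => rw [pow_zero, one_val, Λ.d_ident, zero_smul]
  | succ n ih => rw [pow_succ, mul_val, Λ.d_comp, ih, succ_nsmul]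

lemma isPrefix_pow (L : Λ.End v) {m n : ℕ} (h : m ≤ n) :
    Λ.IsPrefix (L ^ m).val (L ^ n).val := by
  obtain ⟨r, rfl⟩ := Nat.exists_eq_add_of_le h
  rw [pow_add]
  exact isPrefix_comp _

/-- `f ↦ (L f)(0, eᵢ)`. -/
noncomputable def pullEdge (L : Λ.End v) (i : Fin k) (f : Λ.Edges v i) : Λ.Edges v i :=
  ⟨Λ.initSeg (Λ.comp L.val f.1 (L.src_val.trans f.2.1.symm)) (Pi.single i 1)
      (single_le_d_comp f.2.2 _),
    by rw [rng_initSeg, Λ.rng_comp, L.rng_val], d_initSeg _⟩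

lemma isPrefix_iterate_pullEdge (L : Λ.End v) (f : Λ.Edges v i) (m : ℕ) :
    Λ.IsPrefix ((L.pullEdge i)^[m] f).1
      (Λ.comp (L ^ m).val f.1 ((L ^ m).src_val.trans f.2.1.symm)) := by
  induction m generalizing f with
  | zero =>
    obtain ⟨f, rfl, -⟩ := f
    exact (Λ.ident_comp f _).symm ▸ isPrefix_refl f
  | succ m ih =>
    have hassoc : Λ.comp (L ^ (m + 1)).val f.1 ((L ^ (m + 1)).src_val.trans f.2.1.symm) =
        Λ.comp (L ^ m).val (Λ.comp L.val f.1 (L.src_val.trans f.2.1.symm))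
          (by rw [Λ.rng_comp, L.rng_val, (L ^ m).src_val]) :=
      Λ.comp_assoc _ _ _ _ _ _ _
    rw [Function.iterate_succ_apply, hassoc]
    exact (ih _).trans ((isPrefix_initSeg (single_le_d_comp f.2.2 _)).comp_left _)

lemma exists_isPrefix_pow_comp (hrf : Λ.RowFinite) (L : Λ.End v) (f : Λ.Edges v i) :
    ∃ (g : Λ.Edges v i) (s N : ℕ), s < N ∧
      Λ.IsPrefix g.1 (Λ.comp (L ^ s).val f.1 ((L ^ s).src_val.trans f.2.1.symm)) ∧
      Λ.IsPrefix g.1 (Λ.comp (L ^ N).val g.1 ((L ^ N).src_val.trans g.2.1.symm)) := by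
  have : Finite (Λ.Edges v i) := (hrf v _).to_subtype
  obtain ⟨s, N, hsN, hper⟩ := Function.exists_lt_isPeriodicPt_iterate (L.pullEdge i) f
  have hN := isPrefix_iterate_pullEdge L ((L.pullEdge i)^[s] f) N
  rw [hper.eq] at hN
  exact ⟨_, s, N, hsN, isPrefix_iterate_pullEdge L f s, hN⟩

theorem exists_edge_hasEntrance (hrf : Λ.RowFinite) (hlc : Λ.LocallyConvex) (L : Λ.End v)
    (hL : Λ.HasEntrance L.val) (hi : Λ.d L.val i = 0) (hv : Λ.Receives v i) :
    ∃ (g : Λ.Edges v i) (L' : Λ.End (Λ.src g.1)), Λ.HasEntrance L'.val := by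
  obtain ⟨δ, hδle, hδr, hδne⟩ := hL
  obtain ⟨e, he, hed⟩ := hlc.receives_src (ξ := δ) (i := i) (by have := hδle i; omega)
    (by rw [hδr, L.src_val]; exact hv)
  have hW : Λ.src δ = Λ.rng e := he.symm
  let g₀ : Λ.Edges v i := ⟨Λ.initSeg (Λ.comp δ e hW) (Pi.single i 1) (single_le_d_comp hed _),
    by rw [rng_initSeg, Λ.rng_comp, hδr, L.src_val], d_initSeg _⟩
  obtain ⟨g, s, N, hsN, hgs, ⟨L', hgL', hX⟩⟩ := exists_isPrefix_pow_comp hrf L g₀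
  obtain ⟨ε, hgε, hY⟩ := hgs.trans ((isPrefix_initSeg (single_le_d_comp hed _)).comp_left
    (by rw [Λ.rng_comp, hδr, L.src_val]; exact (L ^ s).src_val))
  have hdL' : Λ.d L' = N • Λ.d L.val := by
    have := congrArg Λ.d hX
    rw [Λ.d_comp, Λ.d_comp, d_pow] at this
    exact add_left_cancel (this.trans (add_comm _ _))
  have hdε : Λ.d ε = s • Λ.d L.val + Λ.d δ := by
    have := congrArg Λ.d hY
    rw [Λ.d_comp, Λ.d_comp, Λ.d_comp, d_pow, g.2.2, hed] at this
    funext j; have := congrFun this j; simp only [Pi.add_apply] at this ⊢; omega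
  have hεle : ∀ j, Λ.d ε j ≤ Λ.d L' j := by
    intro j
    have := Nat.mul_le_mul_right (Λ.d L.val j) hsN
    rw [Nat.succ_mul] at this
    simp only [hdε, hdL', Pi.add_apply, Pi.smul_apply, smul_eq_mul]
    linarith [hδle j]
  have hsL' : Λ.src L' = Λ.src g.1 := by rw [← Λ.src_comp g.1 L' hgL', hX, Λ.src_comp]
  refine ⟨g, ⟨L', hgL'.symm, hsL'⟩, ε, hεle, hgε.symm.trans hsL'.symm, fun hε => ?_⟩
  -- If `L'` began with `ε`, then `Lᴺ g = g L'` would begin both with `Lˢ δ` and, as `s < N`,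
  -- with `Lˢ L(0, d δ)`.
  have h1 : Λ.IsPrefix (Λ.comp (L ^ s).val δ ((L ^ s).src_val.trans (hδr.trans L.src_val).symm))
      (Λ.comp (L ^ N).val g.1 ((L ^ N).src_val.trans g.2.1.symm)) := by
    rw [← hX]
    refine ((isPrefix_comp hW).comp_left
      (by rw [Λ.rng_comp, hδr, L.src_val]; exact (L ^ s).src_val)).trans ?_
    rw [← hY]
    exact (hε ▸ isPrefix_initSeg hεle).comp_left _
  have h2 : Λ.IsPrefix (Λ.comp (L ^ s).val (Λ.initSeg L.val (Λ.d δ) hδle)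
      (by rw [rng_initSeg, L.rng_val]; exact (L ^ s).src_val))
      (Λ.comp (L ^ N).val g.1 ((L ^ N).src_val.trans g.2.1.symm)) :=
    (((isPrefix_initSeg hδle).comp_left (by rw [L.rng_val]; exact (L ^ s).src_val)).trans
      (isPrefix_pow L hsN)).trans (isPrefix_comp _)
  exact hδne (comp_left_cancel (h2.eq_of_d_eq h1 (by rw [Λ.d_comp, Λ.d_comp, d_initSeg])))

end End

lemma exists_next_returnPath (hrf : Λ.RowFinite) (hlc : Λ.LocallyConvex) {L : Λ.Path}
    (hL : Λ.IsReturnPath L) (hLe : Λ.HasEntrance L) (i : Fin k) :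
    ∃ g L' : Λ.Path, Λ.rng g = Λ.src L ∧ Λ.rng L' = Λ.src g ∧
      Λ.IsReturnPath L' ∧ Λ.HasEntrance L' ∧
      (Λ.d L i = 0 → Λ.Receives (Λ.src L) i → Λ.d g = Pi.single i 1) := by
  by_cases h : Λ.d L i = 0 ∧ Λ.Receives (Λ.src L) i
  · obtain ⟨g, L', hL'⟩ := End.exists_edge_hasEntrance hrf hlc ⟨L, hL, rfl⟩ hLe h.1 h.2
    exact ⟨g.1, L'.val, g.2.1, L'.rng_val, L'.rng_val.trans L'.src_val.symm, hL',
      fun _ _ => g.2.2⟩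
  · exact ⟨Λ.ident (Λ.src L), L, Λ.rng_ident _, hL.trans (Λ.src_ident _).symm, hL, hLe,
      fun h1 h2 => absurd ⟨h1, h2⟩ h⟩

theorem exists_returnPath_sequence (hk : 0 < k) (hrf : Λ.RowFinite) (hlc : Λ.LocallyConvex)
    {α : Λ.Path} (hα : Λ.IsReturnPath α) (hαe : Λ.HasEntrance α) :
    ∃ L g : ℕ → Λ.Path,
      (∀ j, Λ.rng (g j) = Λ.src (L j) ∧ Λ.src (g j) = Λ.rng (L (j + 1))) ∧
      (∀ j, Λ.IsReturnPath (L j) ∧ Λ.HasEntrance (L j)) ∧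
      ∀ i n, ∃ j ≥ n, Λ.d (L j) i = 0 → Λ.Receives (Λ.src (L j)) i →
        Λ.d (g j) = Pi.single i 1 := by
  choose g L' hg using fun (L : {L // Λ.IsReturnPath L ∧ Λ.HasEntrance L}) (i : Fin k) =>
    exists_next_returnPath hrf hlc L.2.1 L.2.2 i
  let dir (j : ℕ) : Fin k := ⟨j % k, Nat.mod_lt j hk⟩
  let st (j : ℕ) : {L // Λ.IsReturnPath L ∧ Λ.HasEntrance L} :=
    Nat.rec ⟨α, hα, hαe⟩ (fun j S => ⟨L' S (dir j), (hg S (dir j)).2.2.1, (hg S (dir j)).2.2.2.1⟩) j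
  refine ⟨fun j => (st j).1, fun j => g (st j) (dir j),
    fun j => ⟨(hg _ _).1, (hg _ _).2.1.symm⟩, fun j => (st j).2,
    fun i n => ⟨i + k * n, le_add_left (Nat.le_mul_of_pos_left n hk), ?_⟩⟩
  have hdir : dir (i + k * n) = i := Fin.ext (by simp [dir, Nat.mod_eq_of_lt i.2])
  simpa only [hdir] using (hg (st (i + k * n)) (dir (i + k * n))).2.2.2.2

end KGraph

/-- Corollary 5.3: a row-finite, locally convex `k`-graph containing a return path with
an entrance admits a boundary path `x ∈ Λ^{≤∞}` such that for every `m ≤ d(x)` there are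
`n ≥ m` and `p` with `n + p ≤ d(x)` such that `x(n, n + p)` is a return path with an
entrance. -/
theorem exists_boundary_path_with_return_paths
    {k : ℕ} (hk : 1 ≤ k) (Λ : KGraph k)
    (hrf : Λ.RowFinite) (hlc : Λ.LocallyConvex)
    (hex : ∃ α : Λ.Path, Λ.IsReturnPath α ∧ Λ.HasEntrance α) :
    ∃ x : Λ.BoundaryPath, ∀ (m : Fin k → ℕ), (∀ i, (m i : ℕ∞) ≤ x.deg i) →
      ∃ (n p : Fin k → ℕ) (hnp : ∀ i, ((n i + p i : ℕ) : ℕ∞) ≤ x.deg i),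
        (∀ i, m i ≤ n i) ∧
        Λ.IsReturnPath (x.map n (fun i => n i + p i) (fun i => Nat.le_add_right _ _) hnp) ∧
        Λ.HasEntrance (x.map n (fun i => n i + p i) (fun i => Nat.le_add_right _ _) hnp) := by
  obtain ⟨α, hα, hαe⟩ := hex
  obtain ⟨L, g, hgL, hL, hstep⟩ := KGraph.exists_returnPath_sequence hk hrf hlc hα hαe
  let c := KGraph.PrefixChain.ofComposable (fun j => Λ.comp (L j) (g j) (hgL j).1.symm)
    (fun j => by rw [Λ.src_comp, Λ.rng_comp]; exact (hgL j).2)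
  have hpath : ∀ j, ∃ hLg hc,
      c.path (j + 1) = Λ.comp (c.path j) (Λ.comp (L j) (g j) hLg) hc := fun j => ⟨_, _, rfl⟩
  refine ⟨c.toBoundaryPath (c.not_receives_of_path_succ hpath hlc (fun j => (hL j).1) hstep),
    fun m hm => ?_⟩
  obtain ⟨j, hj⟩ := c.exists_le_d hm
  obtain ⟨hnp, hmap⟩ := c.exists_map_eq_of_path_succ hpath j
  obtain ⟨hret, hent⟩ := hL j
  rw [← hmap] at hret hent
  exact ⟨_, _, hnp, hj, hret, hent⟩
end
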